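/- arXiv:2604.21156 — 5 statements merged into one kernel-verified Lean document; each statement's English description precedes it below -/
import Mathlib

section
/- Two latin squares of order n cannot differ in exactly 3 cells; i.e., |L ∩ L'| ≠ n^2 - 3 for any latin squares L, L' of order n. -/
def IsLatin {n : ℕ} (L : Fin n → Fin n → Fin n) : Prop :=
  (∀ i, Function.Bijective fun j => L i j) ∧ (∀ j, Function.Bijective fun i => L i j)

def interCount {n : ℕ} (L L' : Fin n → Fin n → Fin n) : ℕ :=
  (Finset.univ.filter fun p : Fin n × Fin n => L p.1 p.2 = L' p.1 p.2).card

/-- Two bijections on `Fin n` cannot differ at exactly one point. -/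
lemma diff_card_ne_one {n : ℕ} (f g : Fin n → Fin n) (hf : Function.Bijective f)
    (hg : Function.Bijective g) :
    (Finset.univ.filter fun j => f j ≠ g j).card ≠ 1 := by
  intro h
  obtain ⟨j0, hj0⟩ := Finset.card_eq_one.mp h
  have hmem : ∀ j, j ≠ j0 → f j = g j := by
    intro j hj
    by_contra hne
    have : j ∈ ({j0} : Finset (Fin n)) := by
      rw [← hj0]; exact Finset.mem_filter.mpr ⟨Finset.mem_univ _, hne⟩
    simp at this; exact hj this
  have hj0ne : f j0 ≠ g j0 := by
    have : j0 ∈ Finset.univ.filter fun j => f j ≠ g j := by rw [hj0]; simp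
    simpa using (Finset.mem_filter.mp this).2
  have himg : (Finset.univ.erase j0).image f = (Finset.univ.erase j0).image g :=
    Finset.image_congr (fun j hj => hmem j (Finset.ne_of_mem_erase hj))
  have hfnot : f j0 ∉ (Finset.univ.erase j0).image f := by
    simp only [Finset.mem_image]
    rintro ⟨j, hj, hfj⟩
    exact Finset.ne_of_mem_erase hj (hf.injective hfj)
  have hgnot : g j0 ∉ (Finset.univ.erase j0).image g := by
    simp only [Finset.mem_image]
    rintro ⟨j, hj, hgj⟩
    exact Finset.ne_of_mem_erase hj (hg.injective hgj)
  have hcard : ((Finset.univ.erase j0).image f)ᶜ.card = 1 := by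
    rw [Finset.card_compl, Finset.card_image_of_injective _ hf.injective,
      Finset.card_erase_of_mem (Finset.mem_univ _), Finset.card_univ, Fintype.card_fin]
    omega
  have h1 : f j0 ∈ ((Finset.univ.erase j0).image f)ᶜ := Finset.mem_compl.mpr hfnot
  have h2 : g j0 ∈ ((Finset.univ.erase j0).image f)ᶜ := by
    rw [himg] at *; exact Finset.mem_compl.mpr hgnot
  exact hj0ne (Finset.card_le_one.mp (le_of_eq hcard) _ h1 _ h2)

/-- Two latin squares of order `n` cannot differ in exactly 3 cells:
`|L ∩ L'| ≠ n^2 - 3`. -/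
theorem latin_inter_ne_sq_sub_three {n : ℕ} (L L' : Fin n → Fin n → Fin n)
    (hL : IsLatin L) (hL' : IsLatin L') :
    (interCount L L' : ℤ) ≠ (n : ℤ)^2 - 3 := by
  intro h
  set D := Finset.univ.filter fun p : Fin n × Fin n => L p.1 p.2 ≠ L' p.1 p.2 with hDdef
  have hsum : interCount L L' + D.card = n ^ 2 := by
    have := Finset.card_filter_add_card_filter_not
      (s := (Finset.univ : Finset (Fin n × Fin n)))
      (p := fun p => L p.1 p.2 = L' p.1 p.2)
    simpa [interCount, hDdef, Finset.card_univ, sq] using this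
  have hD3 : D.card = 3 := by
    have : (interCount L L' : ℤ) + D.card = (n : ℤ) ^ 2 := by exact_mod_cast hsum
    omega
  -- row fibers
  have hrow : ∀ p ∈ D, ∀ q ∈ D, p.1 = q.1 := by
    intro p hp q hq
    by_contra hne
    set A := D.filter (fun r => r.1 = p.1) with hA
    set B := D.filter (fun r => r.1 = q.1) with hB
    have hAcard : A.card = (Finset.univ.filter fun j => L p.1 j ≠ L' p.1 j).card := by
      apply Finset.card_bij (fun r _ => r.2)
      · rintro ⟨a, b⟩ hr
        simp only [hA, hDdef, Finset.mem_filter, Finset.mem_univ] at hr ⊢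
        obtain ⟨⟨-, h1⟩, h2⟩ := hr
        subst h2
        exact ⟨trivial, h1⟩
      · rintro ⟨a, b⟩ ha ⟨c, d⟩ hc he
        simp only [hA, Finset.mem_filter] at ha hc
        simp only at he
        exact Prod.ext (ha.2.trans hc.2.symm) he
      · intro j hj
        simp only [Finset.mem_filter, Finset.mem_univ] at hj
        refine ⟨(p.1, j), ?_, rfl⟩
        simp [hA, hDdef, hj.2]
    have hBcard : B.card = (Finset.univ.filter fun j => L q.1 j ≠ L' q.1 j).card := by
      apply Finset.card_bij (fun r _ => r.2)
      · rintro ⟨a, b⟩ hr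
        simp only [hB, hDdef, Finset.mem_filter, Finset.mem_univ] at hr ⊢
        obtain ⟨⟨-, h1⟩, h2⟩ := hr
        subst h2
        exact ⟨trivial, h1⟩
      · rintro ⟨a, b⟩ ha ⟨c, d⟩ hc he
        simp only [hB, Finset.mem_filter] at ha hc
        simp only at he
        exact Prod.ext (ha.2.trans hc.2.symm) he
      · intro j hj
        simp only [Finset.mem_filter, Finset.mem_univ] at hj
        refine ⟨(q.1, j), ?_, rfl⟩
        simp [hB, hDdef, hj.2]
    have hA2 : 2 ≤ A.card := by
      have hne1 : A.card ≠ 1 := by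
        rw [hAcard]; exact diff_card_ne_one _ _ (hL.1 p.1) (hL'.1 p.1)
      have : p ∈ A := Finset.mem_filter.mpr ⟨hp, rfl⟩
      have := Finset.card_pos.mpr ⟨p, this⟩
      omega
    have hB2 : 2 ≤ B.card := by
      have hne1 : B.card ≠ 1 := by
        rw [hBcard]; exact diff_card_ne_one _ _ (hL.1 q.1) (hL'.1 q.1)
      have : q ∈ B := Finset.mem_filter.mpr ⟨hq, rfl⟩
      have := Finset.card_pos.mpr ⟨q, this⟩
      omega
    have hdisj : Disjoint A B := by
      rw [Finset.disjoint_left]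
      intro r hrA hrB
      exact hne ((Finset.mem_filter.mp hrA).2.symm.trans (Finset.mem_filter.mp hrB).2)
    have hsub : A ∪ B ⊆ D := by
      intro r hr
      rcases Finset.mem_union.mp hr with h | h
      · exact (Finset.mem_filter.mp h).1
      · exact (Finset.mem_filter.mp h).1
    have := Finset.card_le_card hsub
    rw [Finset.card_union_of_disjoint hdisj] at this
    omega
  -- column fibers (same argument transposed)
  have hcol : ∀ p ∈ D, ∀ q ∈ D, p.2 = q.2 := by
    intro p hp q hq
    by_contra hne
    set A := D.filter (fun r => r.2 = p.2) with hA
    set B := D.filter (fun r => r.2 = q.2) with hB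
    have hAcard : A.card = (Finset.univ.filter fun i => L i p.2 ≠ L' i p.2).card := by
      apply Finset.card_bij (fun r _ => r.1)
      · rintro ⟨a, b⟩ hr
        simp only [hA, hDdef, Finset.mem_filter, Finset.mem_univ] at hr ⊢
        obtain ⟨⟨-, h1⟩, h2⟩ := hr
        subst h2
        exact ⟨trivial, h1⟩
      · rintro ⟨a, b⟩ ha ⟨c, d⟩ hc he
        simp only [hA, Finset.mem_filter] at ha hc
        simp only at he
        exact Prod.ext he (ha.2.trans hc.2.symm)
      · intro i hi
        simp only [Finset.mem_filter, Finset.mem_univ] at hi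
        refine ⟨(i, p.2), ?_, rfl⟩
        simp [hA, hDdef, hi.2]
    have hBcard : B.card = (Finset.univ.filter fun i => L i q.2 ≠ L' i q.2).card := by
      apply Finset.card_bij (fun r _ => r.1)
      · rintro ⟨a, b⟩ hr
        simp only [hB, hDdef, Finset.mem_filter, Finset.mem_univ] at hr ⊢
        obtain ⟨⟨-, h1⟩, h2⟩ := hr
        subst h2
        exact ⟨trivial, h1⟩
      · rintro ⟨a, b⟩ ha ⟨c, d⟩ hc he
        simp only [hB, Finset.mem_filter] at ha hc
        simp only at he
        exact Prod.ext he (ha.2.trans hc.2.symm)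
      · intro i hi
        simp only [Finset.mem_filter, Finset.mem_univ] at hi
        refine ⟨(i, q.2), ?_, rfl⟩
        simp [hB, hDdef, hi.2]
    have hA2 : 2 ≤ A.card := by
      have hne1 : A.card ≠ 1 := by
        rw [hAcard]; exact diff_card_ne_one _ _ (hL.2 p.2) (hL'.2 p.2)
      have : p ∈ A := Finset.mem_filter.mpr ⟨hp, rfl⟩
      have := Finset.card_pos.mpr ⟨p, this⟩
      omega
    have hB2 : 2 ≤ B.card := by
      have hne1 : B.card ≠ 1 := by
        rw [hBcard]; exact diff_card_ne_one _ _ (hL.2 q.2) (hL'.2 q.2)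
      have : q ∈ B := Finset.mem_filter.mpr ⟨hq, rfl⟩
      have := Finset.card_pos.mpr ⟨q, this⟩
      omega
    have hdisj : Disjoint A B := by
      rw [Finset.disjoint_left]
      intro r hrA hrB
      exact hne ((Finset.mem_filter.mp hrA).2.symm.trans (Finset.mem_filter.mp hrB).2)
    have hsub : A ∪ B ⊆ D := by
      intro r hr
      rcases Finset.mem_union.mp hr with h | h
      · exact (Finset.mem_filter.mp h).1
      · exact (Finset.mem_filter.mp h).1
    have := Finset.card_le_card hsub
    rw [Finset.card_union_of_disjoint hdisj] at this
    omega
  obtain ⟨p, hp⟩ := Finset.card_pos.mp (by omega : 0 < D.card)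
  have hsub : D ⊆ {p} := by
    intro q hq
    have h1 := hrow q hq p hp
    have h2 := hcol q hq p hp
    simp [Prod.ext h1 h2]
  have := Finset.card_le_card hsub
  simp [hD3] at this
end

section
/- Two latin squares of order n cannot differ in exactly 5 cells; i.e., |L ∩ L'| ≠ n^2 - 5 for any latin squares L, L' of order n. -/
/-- Two bijections of `Fin n` that agree off a single point agree everywhere. -/
lemma bij_agree {n : ℕ} {f g : Fin n → Fin n} (hf : Function.Bijective f)
    (hg : Function.Bijective g) (j0 : Fin n) (h : ∀ j, j ≠ j0 → f j = g j) :
    f j0 = g j0 := by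
  obtain ⟨j, hj⟩ := hg.surjective (f j0)
  by_cases hjj : j = j0
  · rw [hjj] at hj; exact hj.symm
  · exact absurd (hf.injective ((h j hjj).trans hj)) hjj

/-- Two latin squares of order `n` cannot differ in exactly 5 cells:
`|L ∩ L'| ≠ n^2 - 5`. -/
theorem latin_inter_ne_sq_sub_five {n : ℕ} (L L' : Fin n → Fin n → Fin n)
    (hL : IsLatin L) (hL' : IsLatin L') :
    (interCount L L' : ℤ) ≠ (n : ℤ)^2 - 5 := by
  intro heq
  set D := Finset.univ.filter (fun p : Fin n × Fin n => ¬ (L p.1 p.2 = L' p.1 p.2)) with hDdef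
  have hsplit : interCount L L' + D.card = n ^ 2 := by
    rw [interCount, hDdef, Finset.card_filter_add_card_filter_not,
      Finset.card_univ, Fintype.card_prod, Fintype.card_fin, sq]
  have hcard : D.card = 5 := by
    have := congrArg (fun x : ℕ => (x : ℤ)) hsplit
    push_cast at this
    omega
  have hmemD : ∀ p : Fin n × Fin n, p ∈ D ↔ L p.1 p.2 ≠ L' p.1 p.2 := by
    intro p; simp [hDdef]
  -- row fibers have ≥ 2 elements
  have hrow : ∀ i ∈ D.image Prod.fst, 2 ≤ (D.filter fun p => p.1 = i).card := by
    intro i hi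
    obtain ⟨p, hpD, hpi⟩ := Finset.mem_image.mp hi
    have h1 : 1 ≤ (D.filter fun p => p.1 = i).card :=
      Finset.card_pos.mpr ⟨p, Finset.mem_filter.mpr ⟨hpD, hpi⟩⟩
    rcases Nat.lt_or_ge (D.filter fun p => p.1 = i).card 2 with hlt | hge
    · exfalso
      have hone : (D.filter fun p => p.1 = i).card = 1 := by omega
      obtain ⟨q, hq⟩ := Finset.card_eq_one.mp hone
      have hqmem : q ∈ D.filter fun p => p.1 = i := by rw [hq]; exact Finset.mem_singleton_self q
      obtain ⟨hqD, hqi⟩ := Finset.mem_filter.mp hqmem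
      have hagree : ∀ j, j ≠ q.2 → L i j = L' i j := by
        intro j hj
        by_contra hne
        have : (i, j) ∈ D.filter fun p => p.1 = i :=
          Finset.mem_filter.mpr ⟨(hmemD (i, j)).mpr hne, rfl⟩
        rw [hq, Finset.mem_singleton] at this
        exact hj (by rw [← this])
      have := bij_agree (hL.1 i) (hL'.1 i) q.2 hagree
      exact (hmemD q).mp hqD (by rw [← hqi] at this; exact this)
    · exact hge
  have hcol : ∀ j ∈ D.image Prod.snd, 2 ≤ (D.filter fun p => p.2 = j).card := by
    intro j hj
    obtain ⟨p, hpD, hpj⟩ := Finset.mem_image.mp hj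
    have h1 : 1 ≤ (D.filter fun p => p.2 = j).card :=
      Finset.card_pos.mpr ⟨p, Finset.mem_filter.mpr ⟨hpD, hpj⟩⟩
    rcases Nat.lt_or_ge (D.filter fun p => p.2 = j).card 2 with hlt | hge
    · exfalso
      have hone : (D.filter fun p => p.2 = j).card = 1 := by omega
      obtain ⟨q, hq⟩ := Finset.card_eq_one.mp hone
      have hqmem : q ∈ D.filter fun p => p.2 = j := by rw [hq]; exact Finset.mem_singleton_self q
      obtain ⟨hqD, hqj⟩ := Finset.mem_filter.mp hqmem
      have hagree : ∀ i, i ≠ q.1 → L i j = L' i j := by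
        intro i hi
        by_contra hne
        have : (i, j) ∈ D.filter fun p => p.2 = j :=
          Finset.mem_filter.mpr ⟨(hmemD (i, j)).mpr hne, rfl⟩
        rw [hq, Finset.mem_singleton] at this
        exact hi (by rw [← this])
      have := bij_agree (hL.2 j) (hL'.2 j) q.1 hagree
      exact (hmemD q).mp hqD (by rw [← hqj] at this; exact this)
    · exact hge
  -- card bounds on row/column images
  have hsumrow : D.card = ∑ i ∈ D.image Prod.fst, (D.filter fun p => p.1 = i).card :=
    Finset.card_eq_sum_card_fiberwise (fun x hx => Finset.mem_image_of_mem _ hx)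
  have hsumcol : D.card = ∑ j ∈ D.image Prod.snd, (D.filter fun p => p.2 = j).card :=
    Finset.card_eq_sum_card_fiberwise (fun x hx => Finset.mem_image_of_mem _ hx)
  have hR : (D.image Prod.fst).card ≤ 2 := by
    by_contra h
    have h3 : 3 ≤ (D.image Prod.fst).card := by omega
    have : 2 * (D.image Prod.fst).card ≤ D.card := by
      rw [hsumrow]
      calc 2 * (D.image Prod.fst).card = ∑ _i ∈ D.image Prod.fst, 2 := by
            rw [Finset.sum_const, smul_eq_mul, mul_comm]
        _ ≤ _ := Finset.sum_le_sum hrow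
    omega
  have hC : (D.image Prod.snd).card ≤ 2 := by
    by_contra h
    have h3 : 3 ≤ (D.image Prod.snd).card := by omega
    have : 2 * (D.image Prod.snd).card ≤ D.card := by
      rw [hsumcol]
      calc 2 * (D.image Prod.snd).card = ∑ _j ∈ D.image Prod.snd, 2 := by
            rw [Finset.sum_const, smul_eq_mul, mul_comm]
        _ ≤ _ := Finset.sum_le_sum hcol
    omega
  have hsub : D ⊆ (D.image Prod.fst) ×ˢ (D.image Prod.snd) := by
    intro p hp
    exact Finset.mem_product.mpr ⟨Finset.mem_image_of_mem _ hp, Finset.mem_image_of_mem _ hp⟩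
  have : D.card ≤ 4 := by
    calc D.card ≤ ((D.image Prod.fst) ×ˢ (D.image Prod.snd)).card := Finset.card_le_card hsub
      _ = (D.image Prod.fst).card * (D.image Prod.snd).card := Finset.card_product _ _
      _ ≤ 2 * 2 := Nat.mul_le_mul hR hC
  omega
end

section
/- With the setup of the generalized product construction, partition the cells of T into boxes B_{j,i'} = { ((i,j),(i',j')) : i ∈ [n], j' ∈ [m] } for j ∈ [m], i' ∈ [n]; then each box B_{j,i'} contains every symbol of [mn] exactly once. -/
def IsLatinOnBundle {n m : ℕ} (k : Fin n) (M : Fin m → Fin m → Fin (n * m)) : Prop :=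
  (∀ j j', (M j j' : ℕ) ∈ Finset.Ico ((k : ℕ) * m) ((k : ℕ) * m + m)) ∧
  (∀ j, Function.Injective fun j' => M j j') ∧
  (∀ j', Function.Injective fun j => M j j')

/-- In the generalized product construction `T ((i,j),(i',j')) = M i (L i i') j j'`,
each box `B_{j,i'}` (fix `j` and `i'`, vary `i` and `j'`) contains every symbol
of `[n*m]` exactly once, i.e., the corresponding map is a bijection. -/
theorem generalized_product_boxes {n m : ℕ} (L : Fin n → Fin n → Fin n)
    (M : Fin n → Fin n → Fin m → Fin m → Fin (n * m))
    (hL : IsLatin L) (hM : ∀ i k, IsLatinOnBundle k (M i k))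
    (j : Fin m) (i' : Fin n) :
    Function.Bijective (fun p : Fin n × Fin m => M p.1 (L p.1 i') j p.2) := by
  rw [Fintype.bijective_iff_injective_and_card]
  refine ⟨?_, by simp⟩
  rintro ⟨i, b⟩ ⟨i2, b2⟩ h
  simp only at h
  have h1 := (hM i (L i i')).1 j b
  have h2 := (hM i2 (L i2 i')).1 j b2
  rw [Finset.mem_Ico] at h1 h2
  have hv : ((M i (L i i') j b : Fin (n*m)) : ℕ) = ((M i2 (L i2 i') j b2 : Fin (n*m)) : ℕ) := by
    rw [h]
  have hm : 0 < m := b.pos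
  have hk : (L i i' : ℕ) = (L i2 i' : ℕ) := by
    have d1 : ((M i (L i i') j b : Fin (n*m)) : ℕ) / m = (L i i' : ℕ) :=
      Nat.div_eq_of_lt_le h1.1 (by rw [add_one_mul]; omega)
    have d2 : ((M i2 (L i2 i') j b2 : Fin (n*m)) : ℕ) / m = (L i2 i' : ℕ) :=
      Nat.div_eq_of_lt_le h2.1 (by rw [add_one_mul]; omega)
    rw [← d1, ← d2, hv]
  have hL2 : L i i' = L i2 i' := Fin.ext hk
  have hi : i = i2 := (hL.2 i').injective hL2
  subst hi
  rw [hL2] at h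
  have hb : b = b2 := (hM i (L i i')).2.1 j h
  rw [hb]
end

section
/- Let Υ(n) = {0,1,2,...,n²−6} ∪ {n²−4, n²}. If w ≥ 5 and h ≥ 2, then every t ∈ Υ(hw) can be written as a sum of h² integers each belonging to Υ(w). -/
/-- `Υ(n) = {0,1,...,n²−6} ∪ {n²−4, n²}`. -/
def Ups (n : ℕ) : Finset ℕ :=
  Finset.range (n^2 - 5) ∪ {n^2 - 4, n^2}

lemma mem_Ups_iff {n x : ℕ} : x ∈ Ups n ↔ x < n^2 - 5 ∨ x = n^2 - 4 ∨ x = n^2 := by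
  simp [Ups, Finset.mem_union, Finset.mem_range, Finset.mem_insert, Finset.mem_singleton]
  tauto

lemma sum_aux (n k W B C : ℕ) (hk : k + 2 ≤ n) :
    ∑ i ∈ Finset.range n,
      (if i < k then W else if i = k then B else if i = k + 1 then C else 0)
      = k * W + B + C := by
  have hfun : ∀ i, (if i < k then W else if i = k then B else if i = k + 1 then C else 0)
      = (if i < k then W else 0) + (if i = k then B else 0) + (if i = k + 1 then C else 0) := by
    intro i
    split_ifs <;> omega
  simp only [hfun]
  rw [Finset.sum_add_distrib, Finset.sum_add_distrib]
  have h1 : ∑ i ∈ Finset.range n, (if i < k then W else 0) = k * W := by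
    rw [← Finset.sum_filter]
    have : Finset.filter (fun i => i < k) (Finset.range n) = Finset.range k := by
      ext i; simp only [Finset.mem_filter, Finset.mem_range]; omega
    rw [this, Finset.sum_const, Finset.card_range, smul_eq_mul]
  have h2 : ∑ i ∈ Finset.range n, (if i = k then B else 0) = B := by
    rw [Finset.sum_ite_eq' (Finset.range n) k (fun _ => B),
      if_pos (Finset.mem_range.mpr (by omega))]
  have h3 : ∑ i ∈ Finset.range n, (if i = k + 1 then C else 0) = C := by
    rw [Finset.sum_ite_eq' (Finset.range n) (k + 1) (fun _ => C),
      if_pos (Finset.mem_range.mpr (by omega))]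
  rw [h1, h2, h3]

lemma decomp_arith (m W t : ℕ) (hW : 25 ≤ W)
    (ht : t + 6 ≤ (m + 2) * W ∨ t = (m + 2) * W - 4 ∨ t = (m + 2) * W) :
    ∃ k B C, k ≤ m ∧ (B < W - 5 ∨ B = W - 4 ∨ B = W) ∧
      (C < W - 5 ∨ C = W - 4 ∨ C = W) ∧ t = k * W + B + C := by
  have hexp : (m + 2) * W = m * W + W + W := by ring
  rcases ht with ht | ht | ht
  · set q := t / W with hq
    set r := t % W with hr
    have e : W * q + r = t := Nat.div_add_mod t W
    have e' : t = q * W + r := by rw [← e]; ring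
    have hrW : r < W := Nat.mod_lt t (by omega)
    have hqm : q ≤ m + 1 := by
      by_contra hc
      have h2 : m + 2 ≤ q := by omega
      have h3 : (m + 2) * W ≤ q * W := Nat.mul_le_mul_right W h2
      linarith [e']
    by_cases hrs : r + 5 < W
    · by_cases hqs : q ≤ m
      · exact ⟨q, r, 0, hqs, Or.inl (by omega), Or.inl (by omega),
          by rw [e', add_zero]⟩
      · have hq1 : q = m + 1 := by omega
        refine ⟨m, W, r, le_refl m, Or.inr (Or.inr rfl), Or.inl (by omega), ?_⟩
        rw [e', hq1]; ring
    · have hqs : q ≤ m := by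
        by_contra hc
        have hq1 : q = m + 1 := by omega
        have e2 : t = m * W + W + r := by rw [e', hq1]; ring
        linarith [e2, ht, hexp]
      refine ⟨q, W - 6, r - (W - 6), hqs, Or.inl (by omega), Or.inl (by omega), ?_⟩
      have hsplit : W - 6 + (r - (W - 6)) = r := by omega
      rw [e', add_assoc, hsplit]
  · refine ⟨m, W, W - 4, le_refl m, Or.inr (Or.inr rfl), Or.inr (Or.inl rfl), ?_⟩
    rw [ht, hexp]
    generalize m * W = X
    omega
  · exact ⟨m, W, W, le_refl m, Or.inr (Or.inr rfl), Or.inr (Or.inr rfl),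
      by rw [ht, hexp]⟩

lemma decomp {h w t : ℕ} (hh : 2 ≤ h) (hw : 5 ≤ w) (ht : t ∈ Ups (h * w)) :
    ∃ k B C, k + 2 ≤ h ^ 2 ∧ B ∈ Ups w ∧ C ∈ Ups w ∧ t = k * w ^ 2 + B + C := by
  obtain ⟨m, hm⟩ : ∃ m, h ^ 2 = m + 2 := ⟨h ^ 2 - 2, by have : 4 ≤ h ^ 2 := (by nlinarith); omega⟩
  have hW : 25 ≤ w ^ 2 := by nlinarith
  have hhw : (h * w) ^ 2 = (m + 2) * w ^ 2 := by rw [mul_pow, hm]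
  rw [mem_Ups_iff, hhw] at ht
  have hX : 25 ≤ (m + 2) * w ^ 2 :=
    le_trans hW (Nat.le_mul_of_pos_left _ (by omega))
  have ht' : t + 6 ≤ (m + 2) * w ^ 2 ∨ t = (m + 2) * w ^ 2 - 4 ∨ t = (m + 2) * w ^ 2 := by
    generalize (m + 2) * w ^ 2 = X at ht hX ⊢
    omega
  obtain ⟨k, B, C, hk, hB, hC, heq⟩ := decomp_arith m (w ^ 2) t hW ht'
  exact ⟨k, B, C, by omega, mem_Ups_iff.mpr hB, mem_Ups_iff.mpr hC, heq⟩

/-- For `h ≥ 2` and `w ≥ 5`, every `t ∈ Υ(hw)` is a sum of `h²` integers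
from `Υ(w)`. -/
theorem ups_sum_decomposition {h w : ℕ} (hh : 2 ≤ h) (hw : 5 ≤ w)
    {t : ℕ} (ht : t ∈ Ups (h * w)) :
    ∃ f : Fin (h^2) → ℕ, (∀ x, f x ∈ Ups w) ∧ ∑ x, f x = t := by
  obtain ⟨k, B, C, hk, hB, hC, htk⟩ := decomp hh hw ht
  refine ⟨fun i => if i.val < k then w ^ 2 else if i.val = k then B
    else if i.val = k + 1 then C else 0, ?_, ?_⟩
  · intro x
    dsimp only
    have hW : 25 ≤ w ^ 2 := by nlinarith
    split_ifs
    · rw [mem_Ups_iff]; right; right; rfl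
    · exact hB
    · exact hC
    · rw [mem_Ups_iff]; left; omega
  · rw [Fin.sum_univ_eq_sum_range
      (fun i => if i < k then w ^ 2 else if i = k then B else if i = k + 1 then C else 0),
      sum_aux _ _ _ _ _ hk, htk]
end

section
/- Let h ∈ {2,3,4}, n = 4h, and Υ(n) = {0,...,n²−6} ∪ {n²−4, n²}. Then every t ∈ Υ(n) with t ∉ {n²−6, n²−9, n²−11} can be written as a sum of h² integers each in Υ(4) = {0,1,2,3,4,6,8,9,12,16}. -/
def Ups4 : Finset ℕ := {0, 1, 2, 3, 4, 6, 8, 9, 12, 16}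

lemma consA {a k t : ℕ} (ha : a ∈ Ups4)
    (h : ∃ f : Fin k → ℕ, (∀ x, f x ∈ Ups4) ∧ ∑ x, f x = t) :
    ∃ f : Fin (k + 1) → ℕ, (∀ x, f x ∈ Ups4) ∧ ∑ x, f x = a + t := by
  obtain ⟨f, hf, hs⟩ := h
  refine ⟨Fin.cons a f, ?_, ?_⟩
  · intro x
    refine Fin.cases ?_ ?_ x
    · exact ha
    · intro i; exact hf i
  · rw [Fin.sum_cons, hs]

lemma rep0 (k : ℕ) : ∃ f : Fin k → ℕ, (∀ x, f x ∈ Ups4) ∧ ∑ x, f x = 0 :=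
  ⟨fun _ => 0, fun _ => show (0:ℕ) ∈ Ups4 by decide, by simp⟩

lemma rep1 {a : ℕ} (ha : a ∈ Ups4) (k : ℕ) :
    ∃ f : Fin (k + 1) → ℕ, (∀ x, f x ∈ Ups4) ∧ ∑ x, f x = a := by
  have := consA ha (rep0 k)
  simpa using this

lemma rep2 {a b : ℕ} (ha : a ∈ Ups4) (hb : b ∈ Ups4) (k : ℕ) :
    ∃ f : Fin (k + 2) → ℕ, (∀ x, f x ∈ Ups4) ∧ ∑ x, f x = a + b :=
  consA ha (rep1 hb k)

/-- Any `t` with `t + 12 ≤ 16 k` is a sum of `k` elements of `Ups4`. -/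
lemma repMain : ∀ k t : ℕ, t + 12 ≤ 16 * k →
    ∃ f : Fin k → ℕ, (∀ x, f x ∈ Ups4) ∧ ∑ x, f x = t := by
  intro k
  induction k with
  | zero => intro t h; omega
  | succ m ih =>
    intro t h
    by_cases h16 : 16 ≤ t
    · have := consA (show (16 : ℕ) ∈ Ups4 by decide) (ih (t - 16) (by omega))
      have ht : 16 + (t - 16) = t := by omega
      rwa [ht] at this
    · by_cases ht4 : t ∈ Ups4
      · exact rep1 ht4 m
      · -- t < 16, t ∉ Ups4, so t ∈ {5,7,10,11,13,14,15}, need two slots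
        match m with
        | 0 =>
          have ht4' : t ≤ 4 := by omega
          interval_cases t <;> exact absurd (by decide) ht4
        | Nat.succ m' =>
          have ht16 : t < 16 := by omega
          interval_cases t
          · exact absurd (by decide) ht4
          · exact absurd (by decide) ht4
          · exact absurd (by decide) ht4
          · exact absurd (by decide) ht4
          · exact absurd (by decide) ht4
          · exact rep2 (a := 4) (b := 1) (by decide) (by decide) m'
          · exact absurd (by decide) ht4
          · exact rep2 (a := 4) (b := 3) (by decide) (by decide) m'
          · exact absurd (by decide) ht4
          · exact absurd (by decide) ht4
          · exact rep2 (a := 6) (b := 4) (by decide) (by decide) m'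
          · exact rep2 (a := 8) (b := 3) (by decide) (by decide) m'
          · exact absurd (by decide) ht4
          · exact rep2 (a := 9) (b := 4) (by decide) (by decide) m'
          · exact rep2 (a := 8) (b := 6) (by decide) (by decide) m'
          · exact rep2 (a := 12) (b := 3) (by decide) (by decide) m'

/-- `a + 16 m` is a sum of `m + 1` elements of `Ups4` when `a ∈ Ups4`. -/
lemma repTop {a : ℕ} (ha : a ∈ Ups4) : ∀ (m t : ℕ), t = a + 16 * m →
    ∃ f : Fin (m + 1) → ℕ, (∀ x, f x ∈ Ups4) ∧ ∑ x, f x = t := by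
  intro m
  induction m with
  | zero => intro t h; subst h; simpa using rep1 ha 0
  | succ m' ih =>
    intro t h
    have := consA (show (16 : ℕ) ∈ Ups4 by decide) (ih (a + 16 * m') rfl)
    have ht : 16 + (a + 16 * m') = t := by omega
    rwa [ht] at this

/-- For `h ∈ {2,3,4}` and `n = 4h`, every `t ∈ Υ(n)` with
`t ∉ {n²−6, n²−9, n²−11}` is a sum of `h²` integers from `Υ(4)`. -/
theorem ups_sum_decomposition_w4 {h : ℕ} (hh : h ∈ ({2, 3, 4} : Finset ℕ))
    {t : ℕ} (ht : t ∈ Ups (4 * h))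
    (ht' : t ∉ ({(4 * h)^2 - 6, (4 * h)^2 - 9, (4 * h)^2 - 11} : Finset ℕ)) :
    ∃ f : Fin (h^2) → ℕ, (∀ x, f x ∈ Ups4) ∧ ∑ x, f x = t := by
  simp only [Ups, Finset.mem_union, Finset.mem_range, Finset.mem_insert,
    Finset.mem_singleton, not_or] at ht ht'
  fin_cases hh
  · -- h = 2, n = 8, k = 4
    show ∃ f : Fin 4 → ℕ, (∀ x, f x ∈ Ups4) ∧ ∑ x, f x = t
    norm_num at ht ht'
    by_cases hle : t + 12 ≤ 64
    · exact repMain 4 t hle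
    · -- t ∈ {54, 56, 57, 60, 64}
      have : t = 54 ∨ t = 56 ∨ t = 57 ∨ t = 60 ∨ t = 64 := by omega
      rcases this with h' | h' | h' | h' | h'
      · exact repTop (a := 6) (by decide) 3 t (by omega)
      · exact repTop (a := 8) (by decide) 3 t (by omega)
      · exact repTop (a := 9) (by decide) 3 t (by omega)
      · exact repTop (a := 12) (by decide) 3 t (by omega)
      · exact repTop (a := 16) (by decide) 3 t (by omega)
  · -- h = 3, n = 12, k = 9
    show ∃ f : Fin 9 → ℕ, (∀ x, f x ∈ Ups4) ∧ ∑ x, f x = t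
    norm_num at ht ht'
    by_cases hle : t + 12 ≤ 144
    · exact repMain 9 t hle
    · have : t = 134 ∨ t = 136 ∨ t = 137 ∨ t = 140 ∨ t = 144 := by omega
      rcases this with h' | h' | h' | h' | h'
      · exact repTop (a := 6) (by decide) 8 t (by omega)
      · exact repTop (a := 8) (by decide) 8 t (by omega)
      · exact repTop (a := 9) (by decide) 8 t (by omega)
      · exact repTop (a := 12) (by decide) 8 t (by omega)
      · exact repTop (a := 16) (by decide) 8 t (by omega)
  · -- h = 4, n = 16, k = 16
    show ∃ f : Fin 16 → ℕ, (∀ x, f x ∈ Ups4) ∧ ∑ x, f x = t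
    norm_num at ht ht'
    by_cases hle : t + 12 ≤ 256
    · exact repMain 16 t hle
    · have : t = 246 ∨ t = 248 ∨ t = 249 ∨ t = 252 ∨ t = 256 := by omega
      rcases this with h' | h' | h' | h' | h'
      · exact repTop (a := 6) (by decide) 15 t (by omega)
      · exact repTop (a := 8) (by decide) 15 t (by omega)
      · exact repTop (a := 9) (by decide) 15 t (by omega)
      · exact repTop (a := 12) (by decide) 15 t (by omega)
      · exact repTop (a := 16) (by decide) 15 t (by omega)
end
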